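/- For every integer n ≥ 1, the n-th Cauchy-Carlitz number satisfies CC_n = Π(n) · Σ_{k=1}^{n} (−1)^k Σ (−1)^{i_1 + ⋯ + i_k} / (L_{i_1} ⋯ L_{i_k}), where the inner sum runs over all k-tuples of integers i_1, …, i_k ≥ 1 with r^{i_1} + ⋯ + r^{i_k} = n + k. -/

import Mathlib

open scoped Classical
open PowerSeries Finset

noncomputable section

variable (F : Type) [Field F] [Fintype F]

/-- The rational function field `K = 𝔽_r(T)`. -/
abbrev K : Type := RatFunc F

/-- `r`, the cardinality of the finite field of constants. -/
def rr : ℕ := Fintype.card F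

/-- The variable `T` of the rational function field. -/
def Tv : K F := RatFunc.X

/-- `[i] = T^{r^i} - T`. -/
def br (i : ℕ) : K F := Tv F ^ (rr F) ^ i - Tv F

/-- `D_0 = 1`, `D_i = [i] · D_{i-1}^r`. -/
def D : ℕ → K F
  | 0 => 1
  | i + 1 => br F (i + 1) * D i ^ rr F

/-- `L_0 = 1`, `L_i = [i] · L_{i-1}`. -/
def L : ℕ → K F
  | 0 => 1
  | i + 1 => br F (i + 1) * L i

/-- The Carlitz factorial `Π(n) = ∏_j D_j^{c_j}`, where `c_j = n / r^j % r` are the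
base-`r` digits of `n` (all digits with index `> n` vanish since `r ≥ 2`). -/
def Cf (n : ℕ) : K F := ∏ j ∈ Finset.range (n + 1), D F j ^ (n / (rr F) ^ j % rr F)

/-- The Carlitz logarithm `log_C(z) = Σ_{i ≥ 0} (-1)^i z^{r^i} / L_i`: the coefficient of
`z^m` is `(-1)^i / L_i` if `m = r^i` and `0` otherwise (note `i ≤ r^i = m` since `r ≥ 2`). -/
def logC : PowerSeries (K F) :=
  PowerSeries.mk fun m =>
    ∑ i ∈ Finset.range (m + 1), if m = (rr F) ^ i then (-1 : K F) ^ i / L F i else 0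

/-- The Carlitz exponential `e_C(z) = Σ_{i ≥ 0} z^{r^i} / D_i`. -/
def eC : PowerSeries (K F) :=
  PowerSeries.mk fun m =>
    ∑ i ∈ Finset.range (m + 1), if m = (rr F) ^ i then 1 / D F i else 0

/-- The power series `log_C(z)/z`. -/
def logCdivZ : PowerSeries (K F) :=
  PowerSeries.mk fun n => PowerSeries.coeff (n + 1) (logC F)

/-- The power series `e_C(z)/z`. -/
def eCdivZ : PowerSeries (K F) :=
  PowerSeries.mk fun n => PowerSeries.coeff (n + 1) (eC F)

/-!
Write `log_C(z)/z = 1 + g` with `g(0) = 0`. Then `z/log_C(z) = Σ_k (-g)^k`, and only the terms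
with `k ≤ n` reach `z^n`. Modulo `z^(n+1)`, `g` is the polynomial
`Σ_{i=1}^{N} (-1)^i z^(r^i - 1) / L_i` for any `N > n`; expanding its `k`-th power as a sum
over `k`-tuples `(i_1, …, i_k)`, the tuples
contributing to `z^n` are those with `Σ_t (r^(i_t) - 1) = n`, i.e. `Σ_t r^(i_t) = n + k`.
-/

namespace PowerSeries

variable {R : Type*} [CommRing R]

theorem coeff_eq_sum_coeff_pow_of_mul_one_add_eq_one {A φ : R⟦X⟧} (hφ : constantCoeff φ = 0)
    (hA : A * (1 + φ) = 1) (n : ℕ) :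
    coeff n A = ∑ k ∈ range (n + 1), (-1) ^ k * coeff n (φ ^ k) := by
  set S := ∑ k ∈ range (n + 1), (-φ) ^ k
  have hS : A = S + A * (-φ) ^ (n + 1) := by
    have hgeom : (1 + φ) * S = 1 - (-φ) ^ (n + 1) := by
      rw [← mul_neg_geom_sum, sub_neg_eq_add]
    calc A = A * ((1 + φ) * S) + A * (-φ) ^ (n + 1) := by rw [hgeom]; ring
      _ = S + A * (-φ) ^ (n + 1) := by rw [← mul_assoc, hA, one_mul]
  have htail : coeff n (A * (-φ) ^ (n + 1)) = 0 := by
    have hX : X ∣ -φ := X_dvd_iff.mpr (by rw [map_neg, hφ, neg_zero])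
    exact X_pow_dvd_iff.mp ((pow_dvd_pow_of_dvd hX _).mul_left A) n (Nat.lt_succ_self n)
  rw [hS, map_add, htail, add_zero, map_sum]
  refine sum_congr rfl fun k _ => ?_
  rw [neg_pow, ← map_one (C (R := R)), ← map_neg, ← map_pow, coeff_C_mul]

theorem coeff_pow_eq_of_X_pow_dvd_sub {φ ψ : R⟦X⟧} {n : ℕ} (h : X ^ (n + 1) ∣ φ - ψ) (k : ℕ) :
    coeff n (φ ^ k) = coeff n (ψ ^ k) :=
  sub_eq_zero.mp <| by
    rw [← map_sub]
    exact X_pow_dvd_iff.mp (h.trans (sub_dvd_pow_sub_pow φ ψ k)) n (Nat.lt_succ_self n)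

theorem coeff_pow_sum_C_mul_X_pow {ι : Type*} (s : Finset ι) (c : ι → R) (e : ι → ℕ) (k n : ℕ) :
    coeff n ((∑ i ∈ s, C (c i) * X ^ e i) ^ k) =
      ∑ p ∈ (Fintype.piFinset fun _ : Fin k => s).filter (fun p => ∑ t, e (p t) = n),
        ∏ t, c (p t) := by
  rw [← Fin.prod_const, prod_univ_sum, map_sum, sum_filter]
  refine sum_congr rfl fun p _ => ?_
  rw [prod_mul_distrib, ← map_prod, prod_pow_eq_pow_sum, coeff_C_mul_X_pow]
  simp only [eq_comm]

end PowerSeries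

lemma one_lt_rr : 1 < rr F := Fintype.one_lt_card

lemma br_ne_zero {i : ℕ} (hi : i ≠ 0) : br F i ≠ 0 := by
  have h : br F i = algebraMap (Polynomial F) (K F) (Polynomial.X ^ rr F ^ i - Polynomial.X) := by
    simp [br, Tv, RatFunc.algebraMap_X]
  rw [h, map_ne_zero_iff _ (RatFunc.algebraMap_injective F)]
  exact FiniteField.X_pow_card_sub_X_ne_zero F (Nat.one_lt_pow hi (one_lt_rr F))

lemma D_ne_zero (i : ℕ) : D F i ≠ 0 := by
  induction i with
  | zero => exact one_ne_zero
  | succ i ih => exact mul_ne_zero (br_ne_zero F i.succ_ne_zero) (pow_ne_zero _ ih)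

lemma Cf_ne_zero (n : ℕ) : Cf F n ≠ 0 :=
  prod_ne_zero_iff.mpr fun j _ => pow_ne_zero _ (D_ne_zero F j)

lemma coeff_logC_eq_sum_range {m N : ℕ} (h : m ≤ N) :
    coeff m (logC F) =
      ∑ i ∈ range (N + 1), if m = rr F ^ i then (-1 : K F) ^ i / L F i else 0 := by
  rw [logC, coeff_mk]
  refine sum_subset (range_subset_range.mpr (by omega)) fun i _ hi => if_neg ?_
  have := Nat.lt_pow_self (n := i) (one_lt_rr F)
  simp only [mem_range] at hi
  omega

def logCdivZSubOneTrunc (N : ℕ) : (K F)⟦X⟧ :=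
  ∑ i ∈ Icc 1 N, C ((-1 : K F) ^ i / L F i) * X ^ (rr F ^ i - 1)

lemma X_pow_dvd_logCdivZ_sub_one_sub_trunc {n N : ℕ} (h : n < N) :
    X ^ (n + 1) ∣ logCdivZ F - 1 - logCdivZSubOneTrunc F N := by
  refine X_pow_dvd_iff.mpr fun m hm => ?_
  have hpos : ∀ i, 0 < rr F ^ i := fun i => pow_pos (by have := one_lt_rr F; omega) i
  rw [map_sub, map_sub, sub_eq_zero, logCdivZ, coeff_mk,
    coeff_logC_eq_sum_range F (by omega : m + 1 ≤ N), sum_range_eq_add_Ico _ (by omega : 0 < N + 1),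
    Finset.Ico_add_one_right_eq_Icc, logCdivZSubOneTrunc, map_sum, coeff_one]
  simp only [coeff_C_mul_X_pow, pow_zero, L, div_one, Nat.add_eq_right, add_sub_cancel_left]
  refine sum_congr rfl fun i _ => if_congr ?_ rfl rfl
  have := hpos i
  omega

lemma constantCoeff_logCdivZ_sub_one : constantCoeff (logCdivZ F - 1) = 0 := by
  have := (one_lt_rr F).ne'
  simp [logCdivZ, logC, sum_range_succ, L, this.symm]

lemma coeff_logCdivZSubOneTrunc_pow (N k n : ℕ) :
    coeff n (logCdivZSubOneTrunc F N ^ k) =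
      ∑ i ∈ (Fintype.piFinset fun _ : Fin k => Icc 1 N).filter
          (fun i => ∑ t, rr F ^ (i t) = n + k),
        (-1 : K F) ^ (∑ t, i t) / ∏ t, L F (i t) := by
  rw [logCdivZSubOneTrunc, coeff_pow_sum_C_mul_X_pow]
  refine sum_congr (filter_congr fun i _ => ?_) fun i _ => ?_
  · have hsum : ∑ t, (rr F ^ (i t) - 1 + 1) = ∑ t, rr F ^ (i t) :=
      sum_congr rfl fun t _ =>
        Nat.sub_add_cancel (Nat.one_le_pow _ _ (by have := one_lt_rr F; omega))
    simp only [sum_add_distrib, Fin.sum_const, smul_eq_mul, mul_one] at hsum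
    omega
  · rw [prod_div_distrib, prod_pow_eq_pow_sum]

/-- Theorem 3: for `n ≥ 1`,
`CC_n = Π(n) Σ_{k=1}^n (-1)^k Σ_{i_1,…,i_k ≥ 1, r^{i_1}+⋯+r^{i_k} = n+k}
  (-1)^{i_1+⋯+i_k} / (L_{i_1} ⋯ L_{i_k})`.
(Each `i_t` in the inner sum satisfies `i_t < r^{i_t} ≤ n + k`, so tuples drawn from
`Icc 1 (n+k)` and filtered by the power-sum condition are exactly the tuples in question.) -/
theorem cauchyCarlitz_eq_sum_over_tuples
    (CC : ℕ → K F)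
    (hCC : (PowerSeries.mk fun n => CC n / Cf F n) * logCdivZ F = 1)
    (n : ℕ) (hn : 1 ≤ n) :
    CC n = Cf F n * ∑ k ∈ Finset.Icc 1 n, (-1 : K F) ^ k *
      ∑ i ∈ (Fintype.piFinset fun _ : Fin k => Finset.Icc 1 (n + k)).filter
          (fun i => ∑ t, (rr F) ^ (i t) = n + k),
        (-1 : K F) ^ (∑ t, i t) / ∏ t, L F (i t) := by
  have hinv := coeff_eq_sum_coeff_pow_of_mul_one_add_eq_one (constantCoeff_logCdivZ_sub_one F)
    (by rwa [add_sub_cancel]) n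
  rw [coeff_mk, sum_range_eq_add_Ico _ (by omega : 0 < n + 1), Finset.Ico_add_one_right_eq_Icc,
    pow_zero, pow_zero, one_mul, coeff_one, if_neg (by omega), zero_add] at hinv
  rw [← mul_div_cancel₀ (CC n) (Cf_ne_zero F n), hinv]
  congr 1
  refine sum_congr rfl fun k hk => ?_
  rw [coeff_pow_eq_of_X_pow_dvd_sub
      (X_pow_dvd_logCdivZ_sub_one_sub_trunc F (by simp at hk; omega : n < n + k)),
    coeff_logCdivZSubOneTrunc_pow]
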